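/- Let t₀ ≤ t₁ be real numbers, let a > 0, and let λ : ℝ → ℝ be continuous on [t₀, t₁] with λ(t) > 0 for all t ∈ [t₀, t₁] and λ(t₀) = a. Assume t₁ < t₀ + 1/(2a) and that for every t ∈ [t₀, t₁) the upper right Dini derivative of λ at t, i.e. limsup_{h → 0⁺} (λ(t + h) − λ(t))/h, is at most 2·λ(t)². Then for every t ∈ [t₀, t₁] one has λ(t) ≤ a / (1 − 2·(t − t₀)·a). -/
import Mathlib

open Filter Set Topology

/-- Riccati comparison with the derivative taken in the upper-right Dini
(lim sup) sense: if `lam` is continuous and positive on `[t₀, t₁]` with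
`lam t₀ = a > 0`, `t₁ < t₀ + 1/(2a)`, and the upper right Dini derivative of
`lam` at each `t ∈ [t₀, t₁)` is at most `2 (lam t)²`, then
`lam t ≤ a / (1 - 2 (t - t₀) a)` on `[t₀, t₁]`. -/
theorem riccati_comparison_dini (t₀ t₁ a : ℝ) (ht : t₀ ≤ t₁) (ha : 0 < a)
    (lam : ℝ → ℝ)
    (hcont : ContinuousOn lam (Set.Icc t₀ t₁))
    (hpos : ∀ t ∈ Set.Icc t₀ t₁, 0 < lam t)
    (hinit : lam t₀ = a)
    (ht₁ : t₁ < t₀ + 1 / (2 * a))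
    (hdini : ∀ t ∈ Set.Ico t₀ t₁,
      Filter.limsup (fun h : ℝ => (((lam (t + h) - lam t) / h : ℝ) : EReal))
        (nhdsWithin 0 (Set.Ioi 0)) ≤ ((2 * (lam t) ^ 2 : ℝ) : EReal)) :
    ∀ t ∈ Set.Icc t₀ t₁, lam t ≤ a / (1 - 2 * (t - t₀) * a) := by
  have h2a0 : (0:ℝ) < 2 * a := by linarith
  have hsub : t₁ - t₀ < 1 / (2 * a) := by linarith
  have h2a : 2 * a * (t₁ - t₀) < 1 := by
    have := (lt_div_iff₀ h2a0).1 hsub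
    linarith
  -- the slope estimate in the "frequently" form needed by the fencing lemma
  have hf' : ∀ x ∈ Set.Ico t₀ t₁, ∀ r, 2 * lam x ^ 2 < r →
      ∃ᶠ z in 𝓝[>] x, slope lam x z < r := by
    intro x hx r hr
    have h1 : Filter.limsup (fun h : ℝ => (((lam (x + h) - lam x) / h : ℝ) : EReal))
        (𝓝[>] (0:ℝ)) < (r : EReal) :=
      lt_of_le_of_lt (hdini x hx) (by exact_mod_cast hr)
    have h2 : ∀ᶠ h in 𝓝[>] (0:ℝ), (lam (x + h) - lam x) / h < r := by
      filter_upwards [Filter.eventually_lt_of_limsup_lt h1] with h hh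
      exact_mod_cast hh
    have hmap : Tendsto (fun z : ℝ => z - x) (𝓝[>] x) (𝓝[>] (0:ℝ)) := by
      apply tendsto_nhdsWithin_of_tendsto_nhds_of_eventually_within
      · have : Tendsto (fun z : ℝ => z - x) (𝓝 x) (𝓝 (x - x)) :=
          ((continuous_id.sub continuous_const).tendsto x)
        simpa using this.mono_left nhdsWithin_le_nhds
      · filter_upwards [self_mem_nhdsWithin] with z hz
        simpa [sub_pos] using hz
    refine ((hmap.eventually h2).mono ?_).frequently
    intro z hz
    have hxz : x + (z - x) = z := by ring
    rw [hxz] at hz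
    rwa [slope_def_field]
  -- main estimate for the perturbed barrier
  have key : ∀ ε : ℝ, 0 < ε → (2 * a + ε) * (t₁ - t₀) < 1 →
      ∀ s ∈ Set.Icc t₀ t₁, lam s ≤ a / (1 - (2 * a + ε) * (s - t₀)) := by
    intro ε hε hε1
    set c := 2 * a + ε with hc_def
    have hc : 0 < c := by positivity
    have Dpos : ∀ s ∈ Set.Icc t₀ t₁, 0 < 1 - c * (s - t₀) := by
      intro s hs
      have h1 : c * (s - t₀) ≤ c * (t₁ - t₀) :=
        mul_le_mul_of_nonneg_left (by linarith [hs.2]) hc.le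
      linarith
    have hDcont : Continuous fun s : ℝ => 1 - c * (s - t₀) := by continuity
    have hB : ContinuousOn (fun s : ℝ => a / (1 - c * (s - t₀))) (Set.Icc t₀ t₁) :=
      continuousOn_const.div hDcont.continuousOn fun s hs => (Dpos s hs).ne'
    have hB' : ∀ x ∈ Set.Ico t₀ t₁,
        HasDerivWithinAt (fun s : ℝ => a / (1 - c * (s - t₀)))
          (a * c / (1 - c * (x - t₀)) ^ 2) (Set.Ici x) x := by
      intro x hx
      have hne : (1 - c * (x - t₀)) ≠ 0 := (Dpos x (Set.Ico_subset_Icc_self hx)).ne'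
      have hD : HasDerivAt (fun s : ℝ => 1 - c * (s - t₀)) (0 - c * 1) x :=
        (hasDerivAt_const x (1:ℝ)).sub (((hasDerivAt_id x).sub_const t₀).const_mul c)
      have := (hasDerivAt_const x a).div hD hne
      have heq : (0 * (1 - c * (x - t₀)) - a * (0 - c * 1)) / (1 - c * (x - t₀)) ^ 2
          = a * c / (1 - c * (x - t₀)) ^ 2 := by ring
      rw [heq] at this
      exact this.hasDerivWithinAt
    have bound : ∀ x ∈ Set.Ico t₀ t₁,
        lam x = a / (1 - c * (x - t₀)) →
        2 * lam x ^ 2 < a * c / (1 - c * (x - t₀)) ^ 2 := by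
      intro x hx hxB
      have hDx := Dpos x (Set.Ico_subset_Icc_self hx)
      have h2 : (0:ℝ) < (1 - c * (x - t₀)) ^ 2 := by positivity
      rw [hxB, div_pow, ← mul_div_assoc, div_lt_div_iff₀ h2 h2]
      nlinarith [mul_pos (mul_pos ha hε) h2]
    have hstart : lam t₀ ≤ a / (1 - c * (t₀ - t₀)) := by
      simp [hinit]
    exact fun s hs =>
      image_le_of_liminf_slope_right_lt_deriv_boundary' hcont hf' hstart hB hB' bound hs
  -- pass to the limit ε → 0⁺
  intro t htmem
  have hden : 0 < 1 - 2 * (t - t₀) * a := by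
    have h1 : 2 * a * (t - t₀) ≤ 2 * a * (t₁ - t₀) :=
      mul_le_mul_of_nonneg_left (by linarith [htmem.2]) h2a0.le
    nlinarith
  have hev : ∀ᶠ ε in 𝓝[>] (0:ℝ), lam t ≤ a / (1 - (2 * a + ε) * (t - t₀)) := by
    have hct : Tendsto (fun ε : ℝ => (2 * a + ε) * (t₁ - t₀)) (𝓝 0)
        (𝓝 ((2 * a + 0) * (t₁ - t₀))) := by
      exact ((continuous_const.add continuous_id).mul continuous_const).tendsto 0
    have h1 : ∀ᶠ ε in 𝓝 (0:ℝ), (2 * a + ε) * (t₁ - t₀) < 1 :=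
      hct.eventually_lt_const (by nlinarith)
    filter_upwards [nhdsWithin_le_nhds h1, self_mem_nhdsWithin] with ε hε1 hε0
    exact key ε hε0 hε1 t htmem
  have htend : Tendsto (fun ε : ℝ => a / (1 - (2 * a + ε) * (t - t₀))) (𝓝[>] (0:ℝ))
      (𝓝 (a / (1 - 2 * (t - t₀) * a))) := by
    have hne : (1 - (2 * a + 0) * (t - t₀)) ≠ 0 := by
      intro h; apply hden.ne'; nlinarith [h]
    have hct : ContinuousAt (fun ε : ℝ => a / (1 - (2 * a + ε) * (t - t₀))) 0 :=
      ContinuousAt.div continuousAt_const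
        (by fun_prop) hne
    have : Tendsto (fun ε : ℝ => a / (1 - (2 * a + ε) * (t - t₀))) (𝓝[>] (0:ℝ))
        (𝓝 (a / (1 - (2 * a + 0) * (t - t₀)))) := hct.tendsto.mono_left nhdsWithin_le_nhds
    have heq : a / (1 - (2 * a + 0) * (t - t₀)) = a / (1 - 2 * (t - t₀) * a) := by
      ring_nf
    rwa [heq] at this
  exact ge_of_tendsto htend hev
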